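/- Let F be a real closed field, φ ∈ Aut(F) a field automorphism, and b ∈ F a big element. Then φ is order preserving, φ(b) is also a big element, and the real number c := log_b(φ(b)) satisfies c · log_b(x) = log_b(φ(x)) for all x > 0 in F. -/

import Mathlib

/-- The logarithm with base a big element `b`, defined via the Dedekind cut of rationals
with lower set `{m/n : n ≥ 1, b^m ≤ a^n}`. -/
noncomputable def logCut {F : Type*} [Field F] [LinearOrder F] [IsStrictOrderedRing F] (b a : F) : ℝ :=
  sSup {r : ℝ | ∃ (m : ℤ) (n : ℕ), 0 < n ∧ r = (m : ℝ) / (n : ℝ) ∧ b ^ m ≤ a ^ n}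

namespace LogCutAux

variable {F : Type*} [Field F] [LinearOrder F] [IsStrictOrderedRing F]

/-- The lower set defining `logCut`. -/
def LSet (b a : F) : Set ℝ :=
  {r : ℝ | ∃ (m : ℤ) (n : ℕ), 0 < n ∧ r = (m : ℝ) / (n : ℝ) ∧ b ^ m ≤ a ^ n}

lemma logCut_eq (b a : F) : logCut b a = sSup (LSet b a) := rfl

lemma zpow_nat_mul (b : F) (m : ℤ) (q : ℕ) : (b ^ m) ^ q = b ^ (m * q) := by
  rw [zpow_mul, zpow_natCast]

section basic

variable {b y : F} (hb : 1 < b)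

include hb

lemma LSet_bddAbove (hbig : ∀ a : F, ∃ m : ℕ, 1 ≤ m ∧ a < b ^ m) (hy : 0 < y) :
    BddAbove (LSet b y) := by
  obtain ⟨M, hM1, hMy⟩ := hbig y
  refine ⟨(M : ℝ), ?_⟩
  rintro r ⟨m, n, hn, rfl, h⟩
  have hle : b ^ m ≤ b ^ ((M * n : ℕ) : ℤ) := by
    calc b ^ m ≤ y ^ n := h
    _ ≤ (b ^ M) ^ n := pow_le_pow_left₀ hy.le hMy.le n
    _ = b ^ (M * n) := (pow_mul b M n).symm
    _ = b ^ ((M * n : ℕ) : ℤ) := by rw [zpow_natCast]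
  have hmn : m ≤ (M * n : ℕ) := (zpow_le_zpow_iff_right₀ hb).mp hle
  have hn' : (0 : ℝ) < (n : ℝ) := by exact_mod_cast hn
  rw [div_le_iff₀ hn']
  exact_mod_cast hmn

lemma LSet_nonempty (hbig : ∀ a : F, ∃ m : ℕ, 1 ≤ m ∧ a < b ^ m) (hy : 0 < y) :
    (LSet b y).Nonempty := by
  obtain ⟨M, hM1, hMy⟩ := hbig y⁻¹
  have hb0 : (0 : F) < b := zero_lt_one.trans hb
  have hbM : (0 : F) < b ^ M := pow_pos hb0 M
  refine ⟨((-(M : ℤ) : ℤ) : ℝ) / ((1 : ℕ) : ℝ), -(M : ℤ), 1, one_pos, rfl, ?_⟩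
  have h1 : (b ^ M)⁻¹ < y := by
    rw [inv_lt_comm₀ hbM hy]
    exact hMy
  rw [pow_one]
  calc b ^ (-(M : ℤ)) = (b ^ (M : ℤ))⁻¹ := by rw [zpow_neg]
  _ = (b ^ M)⁻¹ := by rw [zpow_natCast]
  _ ≤ y := h1.le

lemma le_sup (hbig : ∀ a : F, ∃ m : ℕ, 1 ≤ m ∧ a < b ^ m) (hy : 0 < y)
    {m : ℤ} {n : ℕ} (hn : 0 < n) (h : b ^ m ≤ y ^ n) :
    ((m : ℝ) / (n : ℝ)) ≤ sSup (LSet b y) :=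
  le_csSup (LSet_bddAbove hb hbig hy) ⟨m, n, hn, rfl, h⟩

lemma lt_of_lt_sup (hbig : ∀ a : F, ∃ m : ℕ, 1 ≤ m ∧ a < b ^ m) (hy : 0 < y)
    {m : ℤ} {n : ℕ} (hn : 0 < n) (h : (m : ℝ) / (n : ℝ) < sSup (LSet b y)) :
    b ^ m < y ^ n := by
  obtain ⟨r, hr, hlt⟩ := exists_lt_of_lt_csSup (LSet_nonempty hb hbig hy) h
  obtain ⟨p, q, hq, rfl, hpq⟩ := hr
  have hb0 : (0 : F) < b := zero_lt_one.trans hb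
  have hn' : (0 : ℝ) < (n : ℝ) := by exact_mod_cast hn
  have hq' : (0 : ℝ) < (q : ℝ) := by exact_mod_cast hq
  have hint : m * q < p * n := by
    rw [div_lt_div_iff₀ hn' hq'] at hlt
    exact_mod_cast hlt
  have key : (b ^ m) ^ q < (y ^ n) ^ q := by
    calc (b ^ m) ^ q = b ^ (m * q) := zpow_nat_mul b m q
    _ < b ^ (p * n) := zpow_lt_zpow_right₀ hb (by exact_mod_cast hint)
    _ = (b ^ p) ^ n := (zpow_nat_mul b p n).symm
    _ ≤ (y ^ q) ^ n := pow_le_pow_left₀ (zpow_pos hb0 p).le hpq n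
    _ = (y ^ n) ^ q := by rw [← pow_mul, Nat.mul_comm, pow_mul]
  exact (pow_lt_pow_iff_left₀ (zpow_pos hb0 m).le (pow_nonneg hy.le n) hq.ne') |>.mp key

end basic

section twobases

variable {b b' : F}

lemma c_pos (hb : 1 < b) (hbig : ∀ a : F, ∃ m : ℕ, 1 ≤ m ∧ a < b ^ m)
    (hb' : 1 < b') (hbig' : ∀ a : F, ∃ m : ℕ, 1 ≤ m ∧ a < b' ^ m) :
    0 < sSup (LSet b b') := by
  obtain ⟨n, hn1, hbn⟩ := hbig' b
  have h : b ^ (1 : ℤ) ≤ b' ^ n := by rw [zpow_one]; exact hbn.le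
  have := le_sup hb hbig (zero_lt_one.trans hb') (Nat.lt_of_lt_of_le Nat.zero_lt_one hn1) h
  have hn' : (0 : ℝ) < (n : ℝ) := by exact_mod_cast Nat.lt_of_lt_of_le Nat.zero_lt_one hn1
  calc (0 : ℝ) < ((1 : ℤ) : ℝ) / (n : ℝ) := by positivity
  _ ≤ _ := this

lemma E_nat (hb : 1 < b) (hbig : ∀ a : F, ∃ m : ℕ, 1 ≤ m ∧ a < b ^ m) (hb' : 1 < b')
    {M : ℤ} {K : ℕ} (hK : 0 < K) (h : b ^ M ≤ b' ^ K) :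
    (M : ℝ) ≤ sSup (LSet b b') * K := by
  have := le_sup hb hbig (zero_lt_one.trans hb') hK h
  have hK' : (0 : ℝ) < (K : ℝ) := by exact_mod_cast hK
  rw [div_le_iff₀ hK'] at this
  linarith

lemma F_nat (hb : 1 < b) (hbig : ∀ a : F, ∃ m : ℕ, 1 ≤ m ∧ a < b ^ m) (hb' : 1 < b')
    {M : ℤ} {K : ℕ} (hK : 0 < K) (h : b' ^ K ≤ b ^ M) :
    sSup (LSet b b') * K ≤ (M : ℝ) := by
  have hb0 : (0 : F) < b := zero_lt_one.trans hb
  have hK' : (0 : ℝ) < (K : ℝ) := by exact_mod_cast hK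
  have hsup : sSup (LSet b b') ≤ (M : ℝ) / (K : ℝ) := by
    apply csSup_le (LSet_nonempty hb hbig (zero_lt_one.trans hb'))
    rintro r ⟨p, q, hq, rfl, hpq⟩
    have hq' : (0 : ℝ) < (q : ℝ) := by exact_mod_cast hq
    have chain : b ^ (p * K) ≤ b ^ (M * q) := by
      calc b ^ (p * (K : ℤ)) = (b ^ p) ^ K := (zpow_nat_mul b p K).symm
      _ ≤ (b' ^ q) ^ K := pow_le_pow_left₀ (zpow_pos hb0 p).le hpq K
      _ = (b' ^ K) ^ q := by rw [← pow_mul, Nat.mul_comm, pow_mul]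
      _ ≤ (b ^ M) ^ q := pow_le_pow_left₀ (pow_nonneg (zero_lt_one.trans hb').le K) h q
      _ = b ^ (M * q) := zpow_nat_mul b M q
    have hint : p * (K : ℤ) ≤ M * q := (zpow_le_zpow_iff_right₀ hb).mp chain
    rw [div_le_div_iff₀ hq' hK']
    exact_mod_cast hint
  exact (le_div_iff₀ hK').mp hsup

lemma E_int (hb : 1 < b) (hbig : ∀ a : F, ∃ m : ℕ, 1 ≤ m ∧ a < b ^ m) (hb' : 1 < b')
    {M K : ℤ} (h : b ^ M ≤ b' ^ K) : (M : ℝ) ≤ sSup (LSet b b') * K := by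
  have hb0 : (0 : F) < b := zero_lt_one.trans hb
  have hb'0 : (0 : F) < b' := zero_lt_one.trans hb'
  rcases lt_trichotomy K 0 with hK | hK | hK
  · -- K < 0 : take inverses and use F_nat
    have h' : b' ^ ((-K).toNat) ≤ b ^ (-M) := by
      have h2 : (b' ^ K)⁻¹ ≤ (b ^ M)⁻¹ := inv_anti₀ (zpow_pos hb0 M) h
      rw [← zpow_neg, ← zpow_neg] at h2
      calc b' ^ ((-K).toNat) = b' ^ (((-K).toNat : ℤ)) := (zpow_natCast b' _).symm
      _ = b' ^ (-K) := by rw [Int.toNat_of_nonneg (by omega)]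
      _ ≤ b ^ (-M) := h2
    have := F_nat hb hbig hb' (K := (-K).toNat) (by omega) h'
    have hcast : (((-K).toNat : ℕ) : ℝ) = -(K : ℝ) := by
      rw [show (((-K).toNat : ℕ) : ℝ) = (((-K).toNat : ℤ) : ℝ) by push_cast; ring,
        Int.toNat_of_nonneg (by omega)]
      push_cast; ring
    rw [hcast] at this
    push_cast at this ⊢
    nlinarith
  · subst hK
    have : M ≤ 0 := by
      have : b ^ M ≤ b ^ (0 : ℤ) := by simpa using h
      exact (zpow_le_zpow_iff_right₀ hb).mp this
    have : (M : ℝ) ≤ 0 := by exact_mod_cast this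
    simpa using this
  · have h' : b ^ M ≤ b' ^ (K.toNat) := by
      rw [← zpow_natCast b' K.toNat, Int.toNat_of_nonneg hK.le]; exact h
    have := E_nat hb hbig hb' (K := K.toNat) (by omega) h'
    rwa [show ((K.toNat : ℕ) : ℝ) = (K : ℝ) by
      exact_mod_cast congrArg Int.cast (Int.toNat_of_nonneg hK.le)] at this

lemma F_int (hb : 1 < b) (hbig : ∀ a : F, ∃ m : ℕ, 1 ≤ m ∧ a < b ^ m) (hb' : 1 < b')
    {M K : ℤ} (h : b' ^ K ≤ b ^ M) : sSup (LSet b b') * K ≤ (M : ℝ) := by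
  have hb0 : (0 : F) < b := zero_lt_one.trans hb
  have hb'0 : (0 : F) < b' := zero_lt_one.trans hb'
  rcases lt_trichotomy K 0 with hK | hK | hK
  · have h' : b ^ (-M) ≤ b' ^ (-K) := by
      have h2 : (b ^ M)⁻¹ ≤ (b' ^ K)⁻¹ := inv_anti₀ (zpow_pos hb'0 K) h
      rwa [← zpow_neg, ← zpow_neg] at h2
    have := E_int hb hbig hb' h'
    push_cast at this ⊢
    nlinarith
  · subst hK
    have : (0 : ℤ) ≤ M := by
      have : b ^ (0 : ℤ) ≤ b ^ M := by simpa using h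
      exact (zpow_le_zpow_iff_right₀ hb).mp this
    have : (0 : ℝ) ≤ (M : ℝ) := by exact_mod_cast this
    simpa using this
  · have h' : b' ^ (K.toNat) ≤ b ^ M := by
      rw [← zpow_natCast b' K.toNat, Int.toNat_of_nonneg hK.le]; exact h
    have := F_nat hb hbig hb' (K := K.toNat) (by omega) h'
    rwa [show ((K.toNat : ℕ) : ℝ) = (K : ℝ) by
      exact_mod_cast congrArg Int.cast (Int.toNat_of_nonneg hK.le)] at this

lemma G_lt (hb : 1 < b) (hbig : ∀ a : F, ∃ m : ℕ, 1 ≤ m ∧ a < b ^ m) (hb' : 1 < b')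
    {M K : ℤ} (h : (M : ℝ) < sSup (LSet b b') * K) : b ^ M < b' ^ K := by
  by_contra hcon
  push_neg at hcon
  exact absurd (F_int hb hbig hb' hcon) (not_le.mpr h)

/-- Change of base formula. -/
lemma change_of_base (hb : 1 < b) (hbig : ∀ a : F, ∃ m : ℕ, 1 ≤ m ∧ a < b ^ m)
    (hb' : 1 < b') (hbig' : ∀ a : F, ∃ m : ℕ, 1 ≤ m ∧ a < b' ^ m)
    {y : F} (hy : 0 < y) :
    sSup (LSet b b') * sSup (LSet b' y) = sSup (LSet b y) := by
  set c := sSup (LSet b b') with hc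
  set t := sSup (LSet b' y) with ht
  have hcpos : 0 < c := c_pos hb hbig hb' hbig'
  have hb0 : (0 : F) < b := zero_lt_one.trans hb
  have hb'0 : (0 : F) < b' := zero_lt_one.trans hb'
  -- Lemma D : rationals below c * t are in LSet b y
  have lemD : ∀ (m : ℤ) (n : ℕ), 0 < n → (m : ℝ) / (n : ℝ) < c * t → b ^ m < y ^ n := by
    intro m n hn hlt
    have hn' : (0 : ℝ) < (n : ℝ) := by exact_mod_cast hn
    have h1 : (m : ℝ) / (n : ℝ) / c < t := by
      rw [div_lt_iff₀ hcpos]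
      linarith [hlt, mul_comm c t]
    obtain ⟨r, hr, hlt2⟩ := exists_lt_of_lt_csSup (LSet_nonempty hb' hbig' hy) h1
    obtain ⟨p, q, hq, rfl, hpq⟩ := hr
    have hq' : (0 : ℝ) < (q : ℝ) := by exact_mod_cast hq
    have hmq : ((m * q : ℤ) : ℝ) < c * ((p * n : ℤ) : ℝ) := by
      rw [div_div, div_lt_div_iff₀ (by positivity) hq'] at hlt2
      push_cast
      nlinarith
    have hzp : b ^ (m * (q : ℤ)) < b' ^ (p * (n : ℤ)) := G_lt hb hbig hb' hmq
    have key : (b ^ m) ^ q < (y ^ n) ^ q := by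
      calc (b ^ m) ^ q = b ^ (m * q) := zpow_nat_mul b m q
      _ < b' ^ (p * n) := hzp
      _ = (b' ^ p) ^ n := (zpow_nat_mul b' p n).symm
      _ ≤ (y ^ q) ^ n := pow_le_pow_left₀ (zpow_pos hb'0 p).le hpq n
      _ = (y ^ n) ^ q := by rw [← pow_mul, Nat.mul_comm, pow_mul]
    exact (pow_lt_pow_iff_left₀ (zpow_pos hb0 m).le (pow_nonneg hy.le n) hq.ne').mp key
  -- Lemma C : members of LSet b y are ≤ c * t
  have lemC : ∀ r ∈ LSet b y, r ≤ c * t := by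
    rintro r ⟨m, n, hn, rfl, h⟩
    have hn' : (0 : ℝ) < (n : ℝ) := by exact_mod_cast hn
    by_contra hcon
    push_neg at hcon
    have h1 : t < (m : ℝ) / (n : ℝ) / c := by
      rw [lt_div_iff₀ hcpos]
      linarith [mul_comm t c]
    obtain ⟨u, hu1, hu2⟩ := exists_rat_btwn h1
    have humem : ¬ ((u : ℝ) ∈ LSet b' y) := by
      intro hmem
      exact absurd (le_csSup (LSet_bddAbove hb' hbig' hy) hmem) (not_le.mpr hu1)
    have hden : (0 : ℕ) < u.den := u.pos
    have hval : ((u.num : ℝ) / (u.den : ℝ)) = (u : ℝ) := (Rat.cast_def u).symm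
    have hnot : ¬ (b' ^ u.num ≤ y ^ u.den) := by
      intro hle
      exact humem ⟨u.num, u.den, hden, hval.symm, hle⟩
    push_neg at hnot
    have chain : b ^ (m * (u.den : ℤ)) < b' ^ (u.num * (n : ℤ)) := by
      calc b ^ (m * (u.den : ℤ)) = (b ^ m) ^ u.den := (zpow_nat_mul b m u.den).symm
      _ ≤ (y ^ n) ^ u.den := pow_le_pow_left₀ (zpow_pos hb0 m).le h u.den
      _ = (y ^ u.den) ^ n := by rw [← pow_mul, Nat.mul_comm, pow_mul]
      _ < (b' ^ u.num) ^ n := pow_lt_pow_left₀ hnot (pow_nonneg hy.le u.den) (by omega)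
      _ = b' ^ (u.num * n) := zpow_nat_mul b' u.num n
    have hE := E_int hb hbig hb' chain.le
    rw [← hc] at hE
    have hden' : (0 : ℝ) < (u.den : ℝ) := by exact_mod_cast hden
    have hu2' : (u.num : ℝ) / (u.den : ℝ) < (m : ℝ) / (n : ℝ) / c := by rw [hval]; exact hu2
    rw [div_div, div_lt_div_iff₀ hden' (by positivity)] at hu2'
    push_cast at hE
    nlinarith
  -- conclude
  apply le_antisymm
  · by_contra hcon
    push_neg at hcon
    obtain ⟨u, hu1, hu2⟩ := exists_rat_btwn hcon
    have hval : ((u.num : ℝ) / (u.den : ℝ)) = (u : ℝ) := (Rat.cast_def u).symm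
    have hmem : (u : ℝ) ∈ LSet b y := by
      refine ⟨u.num, u.den, u.pos, hval.symm, ?_⟩
      exact (lemD u.num u.den u.pos (by rw [hval]; exact hu2)).le
    exact absurd (le_csSup (LSet_bddAbove hb hbig hy) hmem) (not_le.mpr hu1)
  · exact csSup_le (LSet_nonempty hb hbig hy) lemC

end twobases

end LogCutAux

/-- Let `F` be a real closed field, `φ` a field automorphism of `F`, and `b` a big element.
Then `φ` is order preserving, `φ b` is also a big element, and the real number
`c = log_b (φ b)` satisfies `c * log_b x = log_b (φ x)` for all `x > 0`. -/
theorem stmt_6 {F : Type*} [Field F] [LinearOrder F] [IsStrictOrderedRing F]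
    (hsq : ∀ x : F, 0 < x → ∃ y : F, y * y = x)
    (hodd : ∀ p : Polynomial F, Odd p.natDegree → ∃ x : F, p.eval x = 0)
    (φ : F ≃+* F)
    (b : F) (hb : 1 < b) (hbig : ∀ a : F, ∃ m : ℕ, 1 ≤ m ∧ a < b ^ m) :
    (∀ x y : F, x ≤ y → φ x ≤ φ y) ∧
    (0 < φ b ∧ ∀ a : F, ∃ m : ℕ, 1 ≤ m ∧ a < (φ b) ^ m) ∧
    (∀ x : F, 0 < x → logCut b (φ b) * logCut b x = logCut b (φ x)) := by
  have hmono : ∀ x y : F, x ≤ y → φ x ≤ φ y := by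
    intro x y hxy
    rcases eq_or_lt_of_le hxy with h | h
    · rw [h]
    · obtain ⟨z, hz⟩ := hsq (y - x) (sub_pos.mpr h)
      have : φ y - φ x = φ z * φ z := by
        rw [← map_mul, hz, map_sub]
      have h2 : 0 ≤ φ y - φ x := this ▸ mul_self_nonneg (φ z)
      linarith
  have hstrict : ∀ x y : F, x < y → φ x < φ y := by
    intro x y hxy
    refine lt_of_le_of_ne (hmono x y hxy.le) fun h => ?_
    exact absurd (φ.injective h) hxy.ne
  have hrev : ∀ x y : F, φ x ≤ φ y → x ≤ y := by
    intro x y h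
    by_contra hcon
    push_neg at hcon
    exact absurd h (not_le.mpr (hstrict y x hcon))
  have hiff : ∀ x y : F, x ≤ y ↔ φ x ≤ φ y := fun x y => ⟨hmono x y, hrev x y⟩
  have hb'1 : 1 < φ b := by
    have := hstrict 1 b hb
    rwa [map_one] at this
  have hb'0 : 0 < φ b := zero_lt_one.trans hb'1
  have hbig' : ∀ a : F, ∃ m : ℕ, 1 ≤ m ∧ a < (φ b) ^ m := by
    intro a
    obtain ⟨m, hm1, hm2⟩ := hbig (φ.symm a)
    refine ⟨m, hm1, ?_⟩
    have := hstrict (φ.symm a) (b ^ m) hm2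
    rwa [φ.apply_symm_apply, map_pow] at this
  refine ⟨hmono, ⟨hb'0, hbig'⟩, ?_⟩
  intro x hx
  have hφx : 0 < φ x := by
    have := hstrict 0 x hx
    rwa [map_zero] at this
  have hset : LogCutAux.LSet b x = LogCutAux.LSet (φ b) (φ x) := by
    ext r
    constructor
    · rintro ⟨m, n, hn, rfl, h⟩
      refine ⟨m, n, hn, rfl, ?_⟩
      have := hmono _ _ h
      rwa [map_zpow₀, map_pow] at this
    · rintro ⟨m, n, hn, rfl, h⟩
      refine ⟨m, n, hn, rfl, ?_⟩
      rw [← map_zpow₀ φ, ← map_pow φ] at h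
      exact hrev _ _ h
  rw [LogCutAux.logCut_eq, LogCutAux.logCut_eq, LogCutAux.logCut_eq, hset]
  exact LogCutAux.change_of_base hb hbig hb'1 hbig' hφx
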